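/- Let G be an n×n real matrix with G = V D V⁻¹ for an invertible matrix V and a diagonal matrix D with all diagonal entries D_ii ≥ 0; let E and D♯ be as in the context. Then there exists a matrix Z (namely Z = V D♯ V⁻¹) such that simultaneously: (i) exp(−G·τ) converges entrywise to V E V⁻¹ as τ → ∞; (ii) the improper integral ∫₀^∞ (exp(−G·τ) − V E V⁻¹) dτ converges entrywise and equals Z; and (iii) Z satisfies G Z G = G, Z G Z = Z, and G Z = Z G, and Z is the unique matrix with these three properties. -/

import Mathlib

/-!
Conjugating by `V` reduces everything to the diagonal case, where `exp (-τ D)` has entries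
`e^{-τ dₖ}`: these tend to `[dₖ = 0]`, and `e^{-τ dₖ} - [dₖ = 0]` integrates over `(0, ∞)` to
`dₖ⁻¹` (Lean's `0⁻¹ = 0` covers `dₖ = 0`), the `k`-th entry of `D♯ = diagonal d⁻¹`. This is the
group inverse of `D`, group inverses are transported by conjugation, and a group inverse is
unique in any semigroup.
-/

open Matrix MeasureTheory Filter Topology

structure IsGroupInverse {M : Type*} [Mul M] (g z : M) : Prop where
  inner : g * z * g = g
  outer : z * g * z = z
  comm : g * z = z * g

namespace IsGroupInverse

variable {M : Type*}

theorem unique [Semigroup M] {g z₁ z₂ : M} (h₁ : IsGroupInverse g z₁)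
    (h₂ : IsGroupInverse g z₂) : z₁ = z₂ := by
  have key : z₁ * g = g * z₂ :=
    calc z₁ * g = (z₁ * g) * (z₂ * g) := by
          rw [← mul_assoc, mul_assoc z₁ g z₂, mul_assoc, h₂.inner]
      _ = (g * z₁) * (g * z₂) := by rw [h₁.comm, h₂.comm]
      _ = g * z₂ := by rw [← mul_assoc, h₁.inner]
  calc z₁ = z₁ * (z₁ * g) := by rw [← h₁.comm, ← mul_assoc, h₁.outer]
    _ = (g * z₂) * z₂ := by rw [key, ← mul_assoc, key]
    _ = z₂ := by rw [h₂.comm, h₂.outer]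

theorem inv₀ {G₀ : Type*} [GroupWithZero G₀] (a : G₀) : IsGroupInverse a a⁻¹ := by
  rcases eq_or_ne a 0 with rfl | ha
  · exact ⟨by simp, by simp, by simp⟩
  · exact ⟨by simp [ha], by simp [ha], by simp [ha]⟩

theorem pi {ι : Type*} {M : ι → Type*} [∀ i, Mul (M i)] {g z : ∀ i, M i}
    (h : ∀ i, IsGroupInverse (g i) (z i)) : IsGroupInverse g z :=
  ⟨funext fun i => (h i).inner, funext fun i => (h i).outer, funext fun i => (h i).comm⟩

theorem map {N F : Type*} [Mul M] [Mul N] [FunLike F M N] [MulHomClass F M N] (f : F)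
    {g z : M} (h : IsGroupInverse g z) : IsGroupInverse (f g) (f z) :=
  ⟨by rw [← map_mul, ← map_mul, h.inner], by rw [← map_mul, ← map_mul, h.outer],
    by rw [← map_mul, ← map_mul, h.comm]⟩

theorem units_conj [Monoid M] (u : Mˣ) {g z : M} (h : IsGroupInverse g z) :
    IsGroupInverse (u * g * ↑u⁻¹) (u * z * ↑u⁻¹) :=
  let conj : M →* M :=
    { toFun := fun x => u * x * ↑u⁻¹
      map_one' := by simp
      map_mul' := fun x y => by simp [mul_assoc] }
  h.map conj

end IsGroupInverse

section ExpDecay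

open Real Set

variable {c : ℝ}

theorem tendsto_exp_neg_mul_atTop (hc : 0 ≤ c) :
    Tendsto (fun τ => exp (-(c * τ))) atTop (𝓝 (if c = 0 then 1 else 0)) := by
  rcases hc.eq_or_lt with rfl | hc
  · simp
  · simpa [hc.ne'] using tendsto_id.const_mul_atTop hc

theorem integrableOn_exp_neg_mul_sub_Ioi (hc : 0 ≤ c) :
    IntegrableOn (fun τ => exp (-(c * τ)) - if c = 0 then 1 else 0) (Ioi 0) := by
  rcases hc.eq_or_lt with rfl | hc
  · simp
  · simpa [hc.ne'] using integrableOn_exp_mul_Ioi (neg_neg_of_pos hc) 0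

theorem integral_exp_neg_mul_sub_Ioi (hc : 0 ≤ c) :
    ∫ τ in Ioi 0, (exp (-(c * τ)) - if c = 0 then 1 else 0) = c⁻¹ := by
  rcases hc.eq_or_lt with rfl | hc
  · simp
  · simpa [hc.ne'] using integral_exp_mul_Ioi (neg_neg_of_pos hc) 0

end ExpDecay

namespace Matrix

variable {ι l m : Type*} [Fintype ι] [DecidableEq ι]

theorem mul_diagonal_mul_apply {R : Type*} [CommSemiring R] (A : Matrix l ι R) (v : ι → R)
    (B : Matrix ι m R) (i : l) (j : m) :
    (A * diagonal v * B) i j = ∑ k, A i k * v k * B k j := by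
  rw [mul_apply]
  simp only [mul_diagonal]

theorem tendsto_mul_diagonal_mul {α : Type*} {F : Filter α} {f : α → ι → ℝ} {v : ι → ℝ}
    (hf : ∀ k, Tendsto (fun x => f x k) F (𝓝 (v k))) (A : Matrix l ι ℝ) (B : Matrix ι m ℝ) :
    Tendsto (fun x => A * diagonal (f x) * B) F (𝓝 (A * diagonal v * B)) :=
  ((continuous_const.matrix_mul continuous_id.matrix_diagonal).matrix_mul
    continuous_const).tendsto v |>.comp (tendsto_pi_nhds.2 hf)

variable {α : Type*} [MeasurableSpace α] {μ : Measure α} {f : α → ι → ℝ}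

theorem integrable_mul_diagonal_mul_apply (hf : ∀ k, Integrable (fun x => f x k) μ)
    (A : Matrix l ι ℝ) (B : Matrix ι m ℝ) (i : l) (j : m) :
    Integrable (fun x => (A * diagonal (f x) * B) i j) μ := by
  simp only [mul_diagonal_mul_apply]
  exact integrable_finsetSum _ fun k _ => ((hf k).const_mul _).mul_const _

theorem integral_mul_diagonal_mul_apply (hf : ∀ k, Integrable (fun x => f x k) μ)
    (A : Matrix l ι ℝ) (B : Matrix ι m ℝ) (i : l) (j : m) :
    ∫ x, (A * diagonal (f x) * B) i j ∂μ = (A * diagonal (fun k => ∫ x, f x k ∂μ) * B) i j := by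
  simp only [mul_diagonal_mul_apply]
  rw [integral_finsetSum _ fun k _ => ((hf k).const_mul _).mul_const _]
  simp only [integral_mul_const, integral_const_mul]

theorem exp_neg_smul_conj_diagonal {V : Matrix ι ι ℝ} (hV : IsUnit V.det) (d : ι → ℝ) (τ : ℝ) :
    NormedSpace.exp (-(τ • (V * diagonal d * V⁻¹))) =
      V * diagonal (fun k => Real.exp (-(d k * τ))) * V⁻¹ := by
  have : -(τ • (V * diagonal d * V⁻¹)) = V * diagonal (fun k => -(d k * τ)) * V⁻¹ := by
    have hdiag : diagonal (fun k => -(d k * τ)) = -(τ • diagonal d) := by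
      ext i j
      by_cases h : i = j <;> simp [h, mul_comm τ]
    rw [hdiag, Matrix.mul_neg, Matrix.neg_mul, mul_smul_comm, smul_mul_assoc]
  rw [this]
  have := exp_units_conj (nonsingInvUnit V hV) (diagonal fun k => -(d k * τ))
  rwa [exp_diagonal, Pi.exp_def, ← Real.exp_eq_exp_ℝ] at this

theorem isGroupInverse_diagonal_inv {K : Type*} [DivisionRing K] (d : ι → K) :
    IsGroupInverse (diagonal d) (diagonal d⁻¹) :=
  (IsGroupInverse.pi fun k => IsGroupInverse.inv₀ (d k)).map (diagonalRingHom ι K)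

theorem isGroupInverse_conj_diagonal_inv {K : Type*} [Field K] {V : Matrix ι ι K}
    (hV : IsUnit V.det) (d : ι → K) :
    IsGroupInverse (V * diagonal d * V⁻¹) (V * diagonal d⁻¹ * V⁻¹) :=
  (isGroupInverse_diagonal_inv d).units_conj (nonsingInvUnit V hV)

end Matrix

/-- Lemma 1 (full statement): for `G = V D V⁻¹` diagonalizable with nonnegative real
eigenvalues, there is a matrix `Z = V D♯ V⁻¹` such that (i) `exp(−Gτ) → V E V⁻¹`
entrywise as `τ → ∞`, (ii) the deviation integral `∫₀^∞ (exp(−Gτ) − V E V⁻¹) dτ`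
converges entrywise and equals `Z`, and (iii) `Z` is the unique group inverse of `G`. -/
theorem stmt_13 {n : ℕ} (G V E Dsharp : Matrix (Fin n) (Fin n) ℝ) (d : Fin n → ℝ)
    (hV : IsUnit V.det) (hd : ∀ i, 0 ≤ d i)
    (hG : G = V * Matrix.diagonal d * V⁻¹)
    (hE : E = Matrix.diagonal (fun i => if d i = 0 then (1 : ℝ) else 0))
    (hDs : Dsharp = Matrix.diagonal (fun i => if d i ≠ 0 then (d i)⁻¹ else 0)) :
    ∃ Z : Matrix (Fin n) (Fin n) ℝ, Z = V * Dsharp * V⁻¹ ∧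
      (∀ i j, Tendsto (fun τ : ℝ => (NormedSpace.exp (-(τ • G))) i j) atTop
          (nhds ((V * E * V⁻¹) i j))) ∧
      (∀ i j,
        IntegrableOn
          (fun τ : ℝ => (NormedSpace.exp (-(τ • G))) i j - (V * E * V⁻¹) i j)
          (Set.Ioi (0 : ℝ)) ∧
        ∫ τ in Set.Ioi (0 : ℝ),
            ((NormedSpace.exp (-(τ • G))) i j - (V * E * V⁻¹) i j)
          = Z i j) ∧
      (G * Z * G = G ∧ Z * G * Z = Z ∧ G * Z = Z * G) ∧
      (∀ Z' : Matrix (Fin n) (Fin n) ℝ,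
        G * Z' * G = G → Z' * G * Z' = Z' → G * Z' = Z' * G → Z' = Z) := by
  have hDs' : Dsharp = diagonal d⁻¹ := by
    rw [hDs]
    exact congrArg diagonal (funext fun i => by by_cases h : d i = 0 <;> simp [h])
  have hZ : IsGroupInverse G (V * Dsharp * V⁻¹) := by
    rw [hG, hDs']
    exact isGroupInverse_conj_diagonal_inv hV d
  have hexp (τ : ℝ) := hG ▸ exp_neg_smul_conj_diagonal hV d τ
  have hdev (τ : ℝ) (i j : Fin n) : NormedSpace.exp (-(τ • G)) i j - (V * E * V⁻¹) i j =
      (V * diagonal (fun k => Real.exp (-(d k * τ)) - if d k = 0 then 1 else 0) * V⁻¹) i j := by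
    rw [hexp, hE, ← Matrix.sub_apply, ← Matrix.sub_mul, ← Matrix.mul_sub, ← diagonal_sub]
  have hint (k : Fin n) := integrableOn_exp_neg_mul_sub_Ioi (hd k)
  refine ⟨_, rfl, fun i j => ?_, fun i j => ⟨?_, ?_⟩, ⟨hZ.inner, hZ.outer, hZ.comm⟩,
    fun Z' h₁ h₂ h₃ => IsGroupInverse.unique ⟨h₁, h₂, h₃⟩ hZ⟩
  · have hlim := tendsto_mul_diagonal_mul (fun k => tendsto_exp_neg_mul_atTop (hd k)) V V⁻¹
    simp_rw [hexp, hE]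
    exact tendsto_pi_nhds.1 (tendsto_pi_nhds.1 hlim i) j
  · simp_rw [hdev]
    exact integrable_mul_diagonal_mul_apply hint V V⁻¹ i j
  · simp_rw [hdev]
    rw [integral_mul_diagonal_mul_apply hint, hDs']
    simp_rw [integral_exp_neg_mul_sub_Ioi (hd _)]
    rfl
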